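/- arXiv:1607.07073 — 2 statements merged into one kernel-verified Lean document; each statement's English description precedes it below -/
import Mathlib

section
/- Let G be a strongly connected digraph with a fixed start vertex s. For any two vertices u and v of G, u and v are 2-edge-connected if and only if all four of the following hold: (i) r_u = r_v (the bridge-decomposition roots of u and v in G_s coincide); (ii) u and v are strongly connected in the induced subgraph G[D(r_u)]; (iii) r^R_u = r^R_v (the bridge-decomposition roots of u and v in G_s^R coincide); and (iv) u and v are strongly connected in the induced subgraph G^R[D^R(r^R_u)]. -/
/-!  Basic notions for finite directed graphs given by an edge set `E : Set (V × V)`. -/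

variable {V : Type*}

/-- A path from `u` to `v`: a nonempty list of vertices starting at `u`, ending at `v`,
in which every pair of consecutive vertices is an edge. -/
def IsPath (E : Set (V × V)) (u v : V) (p : List V) : Prop :=
  p.Chain' (fun a b => (a, b) ∈ E) ∧ p.head? = some u ∧ p.getLast? = some v

/-- `v` is reachable from `u` by a path. -/
def Reach (E : Set (V × V)) (u v : V) : Prop := ∃ p, IsPath E u v p

/-- Every vertex reaches every other vertex. -/
def StronglyConnected (E : Set (V × V)) : Prop := ∀ u v, Reach E u v

/-- An edge `e` is a strong bridge if its removal destroys strong connectivity. -/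
def StrongBridge (E : Set (V × V)) (e : V × V) : Prop :=
  e ∈ E ∧ ¬ StronglyConnected (E \ {e})

/-- `u` dominates `v` in the flow graph with start vertex `s`:
every path from `s` to `v` contains `u`. -/
def Dominates (E : Set (V × V)) (s u v : V) : Prop :=
  ∀ p, IsPath E s v p → u ∈ p

/-- An edge `e = (e.1, e.2)` is a bridge of the flow graph `G_s`:
every path from `s` to `e.2` contains the edge `e`. -/
def FlowBridge (E : Set (V × V)) (s : V) (e : V × V) : Prop :=
  e ∈ E ∧ ∀ p, IsPath E s e.2 p → [e.1, e.2] <:+: p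

/-- The reverse digraph: all edges reversed. -/
def rev (E : Set (V × V)) : Set (V × V) := {e | (e.2, e.1) ∈ E}

/-- `D(v)`: the set of vertices dominated by `v` in `G_s`. -/
def Dset (E : Set (V × V)) (s v : V) : Set V := {w | Dominates E s v w}

/-- Reachability inside the induced subgraph `G[S]`: a path all of whose vertices lie in `S`. -/
def ReachableIn (E : Set (V × V)) (S : Set V) (u v : V) : Prop :=
  ∃ p, IsPath E u v p ∧ ∀ w ∈ p, w ∈ S

/-- `C` is a strongly connected component of the induced subgraph `G[S]`. -/
def SCCIn (E : Set (V × V)) (S : Set V) (C : Set V) : Prop :=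
  C.Nonempty ∧ C ⊆ S ∧
  (∀ u ∈ C, ∀ v ∈ C, ReachableIn E S u v) ∧
  (∀ v ∈ S, ∀ u ∈ C, ReachableIn E S u v → ReachableIn E S v u → v ∈ C)

/-- A bridge-dominated component: an SCC of `G[D(v)]` for some bridge `(u,v)` of `G_s`. -/
def BridgeDomComponent (E : Set (V × V)) (s : V) (C : Set V) : Prop :=
  ∃ u v, FlowBridge E s (u, v) ∧ SCCIn E (Dset E s v) C

/-- The set of edges used by a path `p`. -/
def pathEdges (p : List V) : Set (V × V) := {e | [e.1, e.2] <:+: p}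

/-- `u` and `v` are `2`-edge-connected: there are two edge-disjoint paths from `u` to `v`
and two edge-disjoint paths from `v` to `u`. -/
def TwoEdgeConnected (E : Set (V × V)) (u v : V) : Prop :=
  (∃ p q, IsPath E u v p ∧ IsPath E u v q ∧ pathEdges p ∩ pathEdges q = ∅) ∧
  (∃ p q, IsPath E v u p ∧ IsPath E v u q ∧ pathEdges p ∩ pathEdges q = ∅)

/-- `u` is the immediate dominator of `v` in `G_s`: a proper dominator of `v`
dominated by every proper dominator of `v`. -/
def ImmDom (E : Set (V × V)) (s u v : V) : Prop :=
  Dominates E s u v ∧ u ≠ v ∧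
  ∀ w, Dominates E s w v → w ≠ v → Dominates E s w u

/-- `depth v = |Dom(v)|`, the number of dominators of `v` in `G_s`. -/
noncomputable def depth (E : Set (V × V)) (s v : V) : ℕ :=
  {u | Dominates E s u v}.ncard

/-- `z` is the nearest common ancestor of `x` and `y` in the dominator tree of `G_s`:
a common dominator of `x` and `y` dominated by every common dominator. -/
def IsNCA (E : Set (V × V)) (s x y z : V) : Prop :=
  Dominates E s z x ∧ Dominates E s z y ∧
  ∀ w, Dominates E s w x → Dominates E s w y → Dominates E s w z

/-- `r` is the bridge-decomposition root of `v` in `G_s`: the deepest dominator `r`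
of `v` such that `r = s` or `(d(r), r)` is a bridge of `G_s`. -/
def IsBDRoot (E : Set (V × V)) (s v r : V) : Prop :=
  Dominates E s r v ∧
  (r = s ∨ ∃ u, ImmDom E s u r ∧ FlowBridge E s (u, r)) ∧
  ∀ r', Dominates E s r' v →
    (r' = s ∨ ∃ u', ImmDom E s u' r' ∧ FlowBridge E s (u', r')) →
    Dominates E s r' r

/-!
If `(a, r)` is the bridge of `G_s` entering `D(r)`, it is the only edge of `G` from outside
`D(r)` into `D(r)`. Hence of two edge-disjoint paths ending in `D(r)` one stays inside `D(r)`,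
and a vertex joined to `u` by two edge-disjoint paths is dominated by `r_u`; applied in `G` and
in `G^R` this gives the forward direction.

Conversely, by Menger's theorem for two edge-disjoint paths it suffices that no edge `e` lies
on every path from `u` to `v`. If `e` lay on every path from `s` to `v`, it would be a bridge of
`G_s` whose head dominates `v`, hence dominates `r_v`, while the path from `u` to `v` inside
`D(r_v)` puts its tail in `D(r_v)`, so that tail and head of `e` would dominate each other.
Otherwise `e` lies on every path from `u` to `s`, and the same argument runs in `G^R`.
Menger's theorem itself is proved by one augmentation: either the residual graph of a simple
`u`-`v` path `p` has a `u`-`v` path, and cancelling edges yields an edge set of net outflow `2`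
at `u` that splits into two edge-disjoint paths, or the set reachable from `u` in the residual
graph is left by `p` exactly once, along an edge every `u`-`v` path must use.
-/

variable {E F : Set (V × V)} {s u v w x y z : V} {p q : List V}

theorem isPath_iff :
    IsPath E u v p ↔ p.IsChain (fun a b => (a, b) ∈ E) ∧ p.head? = some u ∧ p.getLast? = some v :=
  Iff.rfl

theorem isPath_singleton_iff : IsPath E u v [x] ↔ u = x ∧ v = x := by
  simp [isPath_iff, eq_comm]

theorem isPath_cons_cons_iff {l : List V} :
    IsPath E u v (x :: y :: l) ↔ u = x ∧ (x, y) ∈ E ∧ IsPath E y v (y :: l) := by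
  simp only [isPath_iff, List.isChain_cons_cons, List.head?_cons, Option.some.injEq,
    List.getLast?_cons_cons, true_and, eq_comm (a := u)]
  tauto

theorem isPath_singleton (u : V) : IsPath E u u [u] := isPath_singleton_iff.2 ⟨rfl, rfl⟩

theorem isPath_pair (h : (u, v) ∈ E) : IsPath E u v [u, v] :=
  isPath_cons_cons_iff.2 ⟨rfl, h, isPath_singleton v⟩

@[elab_as_elim]
theorem IsPath.induction_on {motive : V → List V → Prop} (h : IsPath E u v p)
    (single : motive v [v])
    (cons : ∀ {x y l}, (x, y) ∈ E → IsPath E y v (y :: l) → motive y (y :: l) →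
      motive x (x :: y :: l)) :
    motive u p := by
  induction p generalizing u with
  | nil => simp [IsPath] at h
  | cons x l ih =>
    rcases l with _ | ⟨y, l⟩
    · obtain ⟨rfl, rfl⟩ := isPath_singleton_iff.1 h
      exact single
    · obtain ⟨rfl, hxy, hy⟩ := isPath_cons_cons_iff.1 h
      exact cons hxy hy (ih hy)

theorem IsPath.mono (hEF : E ⊆ F) (h : IsPath E u v p) : IsPath F u v p :=
  ⟨List.IsChain.imp (fun _ _ h => hEF h) h.1, h.2⟩

theorem IsPath.ne_nil (h : IsPath E u v p) : p ≠ [] := by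
  rintro rfl; simp [IsPath] at h

theorem IsPath.start_mem (h : IsPath E u v p) : u ∈ p := List.mem_of_mem_head? h.2.1

theorem IsPath.reverse (h : IsPath E u v p) : IsPath (rev E) v u p.reverse :=
  ⟨List.isChain_reverse.2 h.1, by simpa using h.2.2, by simpa using h.2.1⟩

theorem IsPath.append (hp : IsPath E u v p) (hq : IsPath E v w q) :
    IsPath E u w (p ++ q.tail) := by
  refine hp.induction_on ?_ ?_
  · rcases q with _ | ⟨a, l⟩
    · simp [IsPath] at hq
    · obtain rfl : a = v := by simpa [IsPath] using hq.2.1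
      exact hq
  · intro x y l hxy _ ih
    exact isPath_cons_cons_iff.2 ⟨rfl, hxy, ih⟩

theorem IsPath.cons (hxy : (x, y) ∈ E) (h : IsPath E y v p) : IsPath E x v (x :: p) := by
  rcases p with _ | ⟨a, l⟩
  · simp [IsPath] at h
  · obtain rfl : a = y := by simpa [IsPath] using h.2.1
    exact isPath_cons_cons_iff.2 ⟨rfl, hxy, h⟩

theorem IsPath.concat (h : IsPath E u v p) (hvw : (v, w) ∈ E) : IsPath E u w (p ++ [w]) :=
  h.append (isPath_pair hvw)

theorem IsPath.split (h : IsPath E u v p) (hx : x ∈ p) :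
    ∃ l₁ l₂, p = l₁ ++ x :: l₂ ∧ IsPath E u x (l₁ ++ [x]) ∧ IsPath E x v (x :: l₂) := by
  refine h.induction_on (motive := fun u p => x ∈ p → ∃ l₁ l₂, p = l₁ ++ x :: l₂ ∧
    IsPath E u x (l₁ ++ [x]) ∧ IsPath E x v (x :: l₂)) ?_ ?_ hx
  · intro hx
    obtain rfl := List.mem_singleton.1 hx
    exact ⟨[], [], rfl, isPath_singleton x, isPath_singleton x⟩
  · intro a b l hab hb ih hx
    rcases List.mem_cons.1 hx with rfl | hx
    · exact ⟨[], b :: l, rfl, isPath_singleton x, hb.cons hab⟩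
    · obtain ⟨l₁, l₂, hl, h₁, h₂⟩ := ih hx
      exact ⟨a :: l₁, l₂, by rw [hl]; rfl, h₁.cons hab, h₂⟩

theorem IsPath.exists_prefix (h : IsPath E u v p) (hx : x ∈ p) :
    ∃ q, IsPath E u x q ∧ q <+: p := by
  obtain ⟨l₁, l₂, rfl, h₁, -⟩ := h.split hx
  exact ⟨l₁ ++ [x], h₁, by simp⟩

theorem IsPath.exists_suffix (h : IsPath E u v p) (hx : x ∈ p) :
    ∃ q, IsPath E x v q ∧ q <:+ p := by
  obtain ⟨l₁, l₂, rfl, -, h₂⟩ := h.split hx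
  exact ⟨x :: l₂, h₂, List.suffix_append _ _⟩

theorem pathEdges_nil : pathEdges ([] : List V) = ∅ := by
  ext e; simp [pathEdges]

theorem pathEdges_singleton (x : V) : pathEdges [x] = ∅ := by
  ext e
  simpa [pathEdges] using fun h : [e.1, e.2] <:+: [x] => by simpa using h.length_le

theorem mem_pathEdges_cons_cons {e : V × V} {l : List V} :
    e ∈ pathEdges (x :: y :: l) ↔ e = (x, y) ∨ e ∈ pathEdges (y :: l) := by
  simp only [pathEdges, Set.mem_ofPred_eq]
  rw [List.infix_cons_iff]
  simp [Prod.ext_iff]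

theorem pathEdges_mono (h : p <:+: q) : pathEdges p ⊆ pathEdges q :=
  fun _ he => he.trans h

theorem fst_mem_of_mem_pathEdges {e : V × V} (he : e ∈ pathEdges p) : e.1 ∈ p :=
  he.subset (by simp)

theorem snd_mem_of_mem_pathEdges {e : V × V} (he : e ∈ pathEdges p) : e.2 ∈ p :=
  he.subset (by simp)

theorem IsPath.mem_of_mem_pathEdges (h : IsPath E u v p) {e : V × V} (he : e ∈ pathEdges p) :
    e ∈ E :=
  List.isChain_pair.1 (h.1.infix he)

theorem mem_pathEdges_reverse {e : V × V} : e ∈ pathEdges p.reverse ↔ e.swap ∈ pathEdges p := by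
  simp only [pathEdges, Set.mem_ofPred_eq, Prod.fst_swap, Prod.snd_swap]
  rw [← List.reverse_infix]
  simp

theorem IsPath.pathEdges_append_subset (hp : IsPath E u v p) (hq : IsPath E v w q) :
    pathEdges (p ++ q.tail) ⊆ pathEdges p ∪ pathEdges q := by
  refine hp.induction_on (motive := fun _ p => pathEdges (p ++ q.tail) ⊆ pathEdges p ∪ pathEdges q)
    ?_ ?_
  · rcases q with _ | ⟨a, l⟩
    · simp [pathEdges_nil]
    · obtain rfl : a = v := by simpa [IsPath] using hq.2.1
      exact Set.subset_union_right
  · intro a b l _ _ ih e he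
    rw [List.cons_append, List.cons_append, mem_pathEdges_cons_cons] at he
    rcases he with rfl | he
    · exact Or.inl (mem_pathEdges_cons_cons.2 (Or.inl rfl))
    · rcases ih he with h | h
      · exact Or.inl (mem_pathEdges_cons_cons.2 (Or.inr h))
      · exact Or.inr h

theorem IsPath.exists_nodup (h : IsPath E u v p) :
    ∃ q, IsPath E u v q ∧ q.Nodup ∧ pathEdges q ⊆ pathEdges p := by
  refine h.induction_on ?_ ?_
  · exact ⟨[v], isPath_singleton v, List.nodup_singleton v, subset_rfl⟩
  · intro x y l hxy _ ⟨q, hq, hqnd, hqsub⟩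
    have hsub : pathEdges (y :: l) ⊆ pathEdges (x :: y :: l) :=
      pathEdges_mono (List.suffix_cons x _).isInfix
    by_cases hxq : x ∈ q
    · obtain ⟨q', hq', hsuf⟩ := hq.exists_suffix hxq
      exact ⟨q', hq', hqnd.sublist hsuf.sublist,
        (pathEdges_mono hsuf.isInfix).trans (hqsub.trans hsub)⟩
    · refine ⟨x :: q, hq.cons hxy, List.nodup_cons.2 ⟨hxq, hqnd⟩, ?_⟩
      rcases q with _ | ⟨a, q⟩
      · exact absurd hq.ne_nil (by simp)
      obtain rfl : a = y := by simpa [IsPath] using hq.2.1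
      intro e he
      rcases mem_pathEdges_cons_cons.1 he with rfl | he
      · exact mem_pathEdges_cons_cons.2 (Or.inl rfl)
      · exact hsub (hqsub he)

theorem IsPath.exists_exit {S : Set V} (h : IsPath E u v p) (hu : u ∈ S) (hv : v ∉ S) :
    ∃ e ∈ pathEdges p, e.1 ∈ S ∧ e.2 ∉ S := by
  refine h.induction_on (motive := fun u p => u ∈ S → ∃ e ∈ pathEdges p, e.1 ∈ S ∧ e.2 ∉ S)
    (fun hv' => absurd hv' hv) ?_ hu
  intro x y l _ _ ih hx
  by_cases hy : y ∈ S
  · obtain ⟨e, he, hS⟩ := ih hy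
    exact ⟨e, mem_pathEdges_cons_cons.2 (Or.inr he), hS⟩
  · exact ⟨(x, y), mem_pathEdges_cons_cons.2 (Or.inl rfl), hx, hy⟩

theorem IsPath.exists_isPath_from_snd_notMem {e : V × V} (h : IsPath E u v p)
    (he : e ∈ pathEdges p) : ∃ q, IsPath E e.2 v q ∧ e ∉ pathEdges q := by
  refine h.induction_on
    (motive := fun _ p => e ∈ pathEdges p → ∃ q, IsPath E e.2 v q ∧ e ∉ pathEdges q)
    (fun he => by simp [pathEdges_singleton] at he) ?_ he
  intro x y l _ hy ih he
  by_cases he' : e ∈ pathEdges (y :: l)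
  · exact ih he'
  · obtain rfl := (mem_pathEdges_cons_cons.1 he).resolve_right he'
    exact ⟨y :: l, hy, he'⟩

theorem IsPath.forall_notMem_of_no_entry {S : Set V} (h : IsPath E u v p) (hu : u ∉ S)
    (hS : ∀ e ∈ pathEdges p, e.2 ∈ S → e.1 ∈ S) : ∀ x ∈ p, x ∉ S := by
  refine h.induction_on (motive := fun u p => u ∉ S → (∀ e ∈ pathEdges p, e.2 ∈ S → e.1 ∈ S) →
    ∀ x ∈ p, x ∉ S) ?_ ?_ hu hS
  · intro hv _ x hx
    rwa [List.mem_singleton.1 hx]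
  · intro a b l _ _ ih ha hS x hx
    have hb : b ∉ S := fun hb => ha (hS _ (mem_pathEdges_cons_cons.2 (Or.inl rfl)) hb)
    rcases List.mem_cons.1 hx with rfl | hx
    · exact ha
    · exact ih hb (fun e he => hS e (mem_pathEdges_cons_cons.2 (Or.inr he))) x hx

theorem IsPath.exit_unique {S : Set V} (h : IsPath E u v p)
    (hS : ∀ e ∈ pathEdges p, e.2 ∈ S → e.1 ∈ S) {e e' : V × V}
    (he : e ∈ pathEdges p) (he₁ : e.1 ∈ S) (he₂ : e.2 ∉ S)
    (he' : e' ∈ pathEdges p) (he'₁ : e'.1 ∈ S) (he'₂ : e'.2 ∉ S) : e = e' := by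
  refine h.induction_on (motive := fun _ p => (∀ e ∈ pathEdges p, e.2 ∈ S → e.1 ∈ S) →
    e ∈ pathEdges p → e' ∈ pathEdges p → e = e') ?_ ?_ hS he he'
  · simp [pathEdges_singleton]
  · intro a b l _ hb ih hS he he'
    have hS' : ∀ f ∈ pathEdges (b :: l), f.2 ∈ S → f.1 ∈ S :=
      fun f hf => hS f (mem_pathEdges_cons_cons.2 (Or.inr hf))
    by_cases hbS : b ∈ S
    · have hexit : ∀ f : V × V, f ∈ pathEdges (a :: b :: l) → f.2 ∉ S → f ∈ pathEdges (b :: l) :=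
        fun f hf hf₂ => (mem_pathEdges_cons_cons.1 hf).resolve_left (by rintro rfl; exact hf₂ hbS)
      exact ih hS' (hexit e he he₂) (hexit e' he' he'₂)
    · have hout := hb.forall_notMem_of_no_entry hbS hS'
      have hfirst : ∀ f : V × V, f ∈ pathEdges (a :: b :: l) → f.1 ∈ S → f = (a, b) :=
        fun f hf hf₁ => (mem_pathEdges_cons_cons.1 hf).resolve_right
          (fun hf' => hout _ (fst_mem_of_mem_pathEdges hf') hf₁)
      rw [hfirst e he he₁, hfirst e' he' he'₁]

theorem dominates_start : Dominates E s s v := fun _ hp => hp.start_mem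

theorem Dominates.trans (hxy : Dominates E s x y) (hyz : Dominates E s y z) :
    Dominates E s x z := by
  intro p hp
  obtain ⟨q, hq, hpre⟩ := hp.exists_prefix (hyz p hp)
  exact hpre.subset (hxy q hq)

theorem Dominates.antisymm (hreach : Reach E s x) (hxy : Dominates E s x y)
    (hyx : Dominates E s y x) : x = y := by
  obtain ⟨p₀, hp₀⟩ := hreach
  obtain ⟨p, hp, hnd, -⟩ := hp₀.exists_nodup
  obtain ⟨q, hq, t, rfl⟩ := hp.exists_prefix (hyx p hp)
  have hxq : x ∈ q := hxy q hq
  rcases List.eq_nil_or_concat t with rfl | ⟨t, z, rfl⟩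
  · simpa [hq.2.2, eq_comm] using hp.2.2
  · have hz : z = x := by simpa using hp.2.2
    exact absurd rfl ((List.nodup_append.1 hnd).2.2 x hxq x (by simp [hz]))

theorem FlowBridge.mem_pathEdges_of_dominates {e : V × V} (hfb : FlowBridge E s e)
    (hdom : Dominates E s e.2 y) (hp : IsPath E s y p) : e ∈ pathEdges p := by
  obtain ⟨q, hq, hpre⟩ := hp.exists_prefix (hdom p hp)
  exact pathEdges_mono hpre.isInfix (hfb.2 q hq)

theorem flowBridge_of_forall_mem {e : V × V} (hreach : Reach E s w)
    (h : ∀ p, IsPath E s w p → e ∈ pathEdges p) : FlowBridge E s e := by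
  obtain ⟨p₀, hp₀⟩ := hreach
  refine ⟨hp₀.mem_of_mem_pathEdges (h p₀ hp₀), fun t ht => ?_⟩
  by_contra het
  obtain ⟨q, hq, heq⟩ := hp₀.exists_isPath_from_snd_notMem (h p₀ hp₀)
  rcases ht.pathEdges_append_subset hq (h _ (ht.append hq)) with he | he
  · exact het he
  · exact heq he

theorem FlowBridge.fst_ne_snd {e : V × V} (hreach : Reach E s e.2) (hfb : FlowBridge E s e) :
    e.1 ≠ e.2 := by
  obtain ⟨p₀, hp₀⟩ := hreach
  obtain ⟨p, hp, hnd, -⟩ := hp₀.exists_nodup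
  intro he
  have := hnd.sublist (hfb.2 p hp).sublist
  simp [he] at this

theorem FlowBridge.immDom {e : V × V} (hreach : Reach E s e.2) (hfb : FlowBridge E s e) :
    ImmDom E s e.1 e.2 := by
  refine ⟨fun p hp => fst_mem_of_mem_pathEdges (hfb.2 p hp), hfb.fst_ne_snd hreach, ?_⟩
  intro w hw hwe p hp
  have := hw _ (hp.concat hfb.1)
  simpa [hwe] using this

theorem FlowBridge.eq_of_notMem_of_mem {a r : V} (hfb : FlowBridge E s (a, r))
    (hxy : (x, y) ∈ E) (hx : x ∉ Dset E s r) (hy : y ∈ Dset E s r) : (x, y) = (a, r) := by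
  obtain ⟨p, hp, hrp⟩ : ∃ p, IsPath E s x p ∧ r ∉ p := by
    simpa [Dset, Dominates] using hx
  have hyr : y = r := by
    simpa [hrp, eq_comm] using hy _ (hp.concat hxy)
  subst hyr
  rcases hp.pathEdges_append_subset (isPath_pair hxy) (hfb.2 _ (hp.concat hxy)) with h | h
  · exact absurd (snd_mem_of_mem_pathEdges h) hrp
  · simpa [mem_pathEdges_cons_cons, pathEdges_singleton, eq_comm] using h

def EdgeDisjointPaths (E : Set (V × V)) (u v : V) : Prop :=
  ∃ p q, IsPath E u v p ∧ IsPath E u v q ∧ pathEdges p ∩ pathEdges q = ∅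

theorem EdgeDisjointPaths.exists_isPath_notMem (h : EdgeDisjointPaths E u v) (e : V × V) :
    ∃ p, IsPath E u v p ∧ e ∉ pathEdges p := by
  obtain ⟨p, q, hp, hq, hpq⟩ := h
  by_cases he : e ∈ pathEdges p
  · exact ⟨q, hq, fun he' => (Set.eq_empty_iff_forall_notMem.1 hpq) e ⟨he, he'⟩⟩
  · exact ⟨p, hp, he⟩

theorem IsBDRoot.eq_start_or_flowBridge {r : V} (h : IsBDRoot E s v r) :
    r = s ∨ ∃ a, FlowBridge E s (a, r) :=
  h.2.1.imp_right fun ⟨a, _, hfb⟩ => ⟨a, hfb⟩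

theorem IsBDRoot.dominates_of_edgeDisjointPaths {r : V} (hr : IsBDRoot E s u r)
    (h : EdgeDisjointPaths E v u) : Dominates E s r v := by
  rcases hr.eq_start_or_flowBridge with rfl | ⟨a, hfb⟩
  · exact dominates_start
  intro q hq
  by_contra hrq
  obtain ⟨p, hp, hap⟩ := h.exists_isPath_notMem (a, r)
  rcases hq.pathEdges_append_subset hp
    (hfb.mem_pathEdges_of_dominates hr.1 (hq.append hp)) with he | he
  · exact hrq (snd_mem_of_mem_pathEdges he)
  · exact hap he

theorem EdgeDisjointPaths.reachableIn_Dset {r : V} (h : EdgeDisjointPaths E x y)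
    (hr : r = s ∨ ∃ a, FlowBridge E s (a, r)) (hy : Dominates E s r y) :
    ReachableIn E (Dset E s r) x y := by
  rcases hr with rfl | ⟨a, hfb⟩
  · obtain ⟨p, -, hp, -⟩ := h
    exact ⟨p, hp, fun _ _ => dominates_start⟩
  obtain ⟨p, hp, hap⟩ := h.exists_isPath_notMem (a, r)
  refine ⟨p, hp, fun z hz => ?_⟩
  by_contra hzD
  obtain ⟨q, hq, hsuf⟩ := hp.exists_suffix hz
  obtain ⟨e, he, he₁, he₂⟩ := hq.exists_exit (S := (Dset E s r)ᶜ) hzD (not_not.2 hy)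
  have : e = (a, r) := hfb.eq_of_notMem_of_mem (hq.mem_of_mem_pathEdges he) he₁ (not_not.1 he₂)
  exact hap (this ▸ pathEdges_mono hsuf.isInfix he)

theorem IsBDRoot.eq_of_twoEdgeConnected {ru rv : V} (hreach : Reach E s ru)
    (hu : IsBDRoot E s u ru) (hv : IsBDRoot E s v rv) (h : TwoEdgeConnected E u v) :
    ru = rv :=
  (hv.2.2 ru (hu.dominates_of_edgeDisjointPaths h.2) hu.2.1).antisymm hreach
    (hu.2.2 rv (hv.dominates_of_edgeDisjointPaths h.1) hv.2.1)

theorem TwoEdgeConnected.bdRoot_eq_and_reachableIn {ru rv : V} (hSC : StronglyConnected E)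
    (hu : IsBDRoot E s u ru) (hv : IsBDRoot E s v rv) (h : TwoEdgeConnected E u v) :
    ru = rv ∧ ReachableIn E (Dset E s ru) u v ∧ ReachableIn E (Dset E s ru) v u :=
  ⟨hu.eq_of_twoEdgeConnected (hSC s ru) hv h,
    EdgeDisjointPaths.reachableIn_Dset h.1 hu.eq_start_or_flowBridge
      (hu.dominates_of_edgeDisjointPaths h.2),
    EdgeDisjointPaths.reachableIn_Dset h.2 hu.eq_start_or_flowBridge hu.1⟩

theorem StronglyConnected.rev (h : StronglyConnected E) : StronglyConnected (rev E) :=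
  fun a b => (h b a).elim fun p hp => ⟨p.reverse, hp.reverse⟩

theorem EdgeDisjointPaths.rev (h : EdgeDisjointPaths E u v) : EdgeDisjointPaths (rev E) v u := by
  obtain ⟨p, q, hp, hq, hpq⟩ := h
  refine ⟨p.reverse, q.reverse, hp.reverse, hq.reverse, ?_⟩
  ext e
  simpa [mem_pathEdges_reverse] using fun h₁ h₂ =>
    (Set.eq_empty_iff_forall_notMem.1 hpq) e.swap ⟨h₁, h₂⟩

theorem TwoEdgeConnected.rev (h : TwoEdgeConnected E u v) : TwoEdgeConnected (rev E) u v :=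
  ⟨EdgeDisjointPaths.rev h.2, EdgeDisjointPaths.rev h.1⟩

section NetOutflow

variable [DecidableEq V]

def edgeFinset (p : List V) : Finset (V × V) := (p.zip p.tail).toFinset

def netOutflow (F : Finset (V × V)) (z : V) : ℤ :=
  ∑ e ∈ F, ((if e.1 = z then 1 else 0) - if e.2 = z then 1 else 0)

theorem mem_edgeFinset {e : V × V} : e ∈ edgeFinset p ↔ e ∈ pathEdges p := by
  induction p with
  | nil => simp [edgeFinset, pathEdges_nil]
  | cons x l ih =>
    rcases l with _ | ⟨y, l⟩
    · simp [edgeFinset, pathEdges_singleton]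
    · simp only [edgeFinset, List.mem_toFinset, List.tail_cons, List.zip_cons_cons,
        List.mem_cons] at ih ⊢
      rw [ih, mem_pathEdges_cons_cons]

theorem netOutflow_union {A B : Finset (V × V)} (h : Disjoint A B) (z : V) :
    netOutflow (A ∪ B) z = netOutflow A z + netOutflow B z :=
  Finset.sum_union h

theorem netOutflow_sdiff {A B : Finset (V × V)} (h : B ⊆ A) (z : V) :
    netOutflow (A \ B) z = netOutflow A z - netOutflow B z :=
  Finset.sum_sdiff_eq_sub h

theorem netOutflow_image_swap (A : Finset (V × V)) (z : V) :
    netOutflow (A.image Prod.swap) z = - netOutflow A z := by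
  rw [netOutflow, Finset.sum_image (fun _ _ _ _ h => Prod.swap_injective h), netOutflow,
    ← Finset.sum_neg_distrib]
  simp

theorem IsPath.netOutflow_edgeFinset (h : IsPath E u v p) (hnd : p.Nodup) (z : V) :
    netOutflow (edgeFinset p) z = (if u = z then 1 else 0) - if v = z then 1 else 0 := by
  refine h.induction_on (motive := fun u p => p.Nodup →
    netOutflow (edgeFinset p) z = (if u = z then 1 else 0) - if v = z then 1 else 0) ?_ ?_ hnd
  · intro _
    simp [netOutflow, edgeFinset]
  · intro x y l _ _ ih hnd
    have hx : (x, y) ∉ edgeFinset (y :: l) := fun hxy =>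
      (List.nodup_cons.1 hnd).1 (fst_mem_of_mem_pathEdges (mem_edgeFinset.1 hxy))
    have hins : edgeFinset (x :: y :: l) = insert (x, y) (edgeFinset (y :: l)) := by
      simp [edgeFinset]
    rw [hins, netOutflow, Finset.sum_insert hx, ← netOutflow, ih (List.nodup_cons.1 hnd).2]
    split_ifs <;> omega

theorem exists_isPath_of_netOutflow_pos (F : Finset (V × V)) (hF : ∀ z ≠ v, 0 ≤ netOutflow F z)
    (hw : 0 < netOutflow F w) : ∃ p, IsPath (↑F) w v p := by
  induction F using Finset.strongInduction generalizing w with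
  | H F ih =>
  let δ : V × V → V → ℤ := fun e z => (if e.1 = z then 1 else 0) - if e.2 = z then 1 else 0
  obtain ⟨e, heF, he⟩ := Finset.exists_lt_of_sum_lt (s := F) (f := fun _ => 0)
    (g := fun e => δ e w) (by rw [Finset.sum_const_zero]; exact hw)
  obtain rfl : e.1 = w := by
    by_contra h
    simp only [δ, h, if_false] at he
    split_ifs at he <;> omega
  have hstep : ((e.1, e.2) : V × V) ∈ (↑F : Set (V × V)) := heF
  by_cases hev : e.2 = v
  · exact ⟨[e.1, v], isPath_pair (hev ▸ hstep)⟩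
  have herase : ∀ z, netOutflow (F.erase e) z = netOutflow F z - δ e z :=
    fun z => Finset.sum_erase_eq_sub heF
  have hnext : 0 < netOutflow (F.erase e) e.2 := by
    have := hF e.2 hev
    rw [herase]
    simp only [δ, if_true]
    split_ifs with h
    · rw [← h]; omega
    · omega
  obtain ⟨p, hp⟩ := ih (F.erase e) (Finset.erase_ssubset heF)
    (fun z hz => by
      have := hF z hz
      rw [herase]
      simp only [δ]
      split_ifs with h₁ h₂ <;> subst_vars <;> omega) hnext
  exact ⟨e.1 :: p, (hp.mono (Finset.coe_subset.2 (Finset.erase_subset e F))).cons hstep⟩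

end NetOutflow

/-- The residual graph of the unit flow along the edge set `P`. -/
def residualEdges (E P : Set (V × V)) : Set (V × V) := (E \ P) ∪ Prod.swap ⁻¹' P

theorem IsPath.exists_forall_mem_of_not_reach_residualEdges (hp : IsPath E u v p)
    (hv : ¬ Reach (residualEdges E (pathEdges p)) u v) :
    ∃ e, ∀ q, IsPath E u v q → e ∈ pathEdges q := by
  let S := {z | Reach (residualEdges E (pathEdges p)) u z}
  have hS : ∀ e ∈ residualEdges E (pathEdges p), e.1 ∈ S → e.2 ∈ S :=
    fun e he ⟨g, hg⟩ => ⟨g ++ [e.2], hg.concat he⟩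
  have hno_entry : ∀ e ∈ pathEdges p, e.2 ∈ S → e.1 ∈ S :=
    fun e he h₂ => hS e.swap (Or.inr he) h₂
  obtain ⟨e₀, he₀, he₀₁, he₀₂⟩ := hp.exists_exit (S := S) ⟨[u], isPath_singleton u⟩ hv
  refine ⟨e₀, fun q hq => ?_⟩
  obtain ⟨e, he, he₁, he₂⟩ := hq.exists_exit (S := S) ⟨[u], isPath_singleton u⟩ hv
  have hep : e ∈ pathEdges p := by
    by_contra hep
    exact he₂ (hS e (Or.inl ⟨hq.mem_of_mem_pathEdges he, hep⟩) he₁)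
  rwa [← hp.exit_unique hno_entry hep he₁ he₂ he₀ he₀₁ he₀₂]

theorem edgeDisjointPaths_of_netOutflow [DecidableEq V] (F : Finset (V × V)) (hFE : ↑F ⊆ E)
    (huv : u ≠ v)
    (hF : ∀ z, netOutflow F z = 2 * ((if u = z then 1 else 0) - if v = z then 1 else 0)) :
    EdgeDisjointPaths E u v := by
  have hFv : ∀ z ≠ v, 0 ≤ netOutflow F z := fun z hz => by
    rw [hF]; split_ifs <;> simp_all
  have hu : 0 < netOutflow F u := by rw [hF]; simp [huv.symm]
  obtain ⟨p₀, hp₀⟩ := exists_isPath_of_netOutflow_pos F hFv hu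
  obtain ⟨p, hp, hnd, hpsub⟩ := hp₀.exists_nodup
  have hTF : edgeFinset p ⊆ F := fun e he =>
    hp₀.mem_of_mem_pathEdges (hpsub (mem_edgeFinset.1 he))
  have hF₂ : ∀ z, netOutflow (F \ edgeFinset p) z =
      (if u = z then 1 else 0) - if v = z then 1 else 0 := fun z => by
    rw [netOutflow_sdiff hTF, hF, hp.netOutflow_edgeFinset hnd]; ring
  obtain ⟨q, hq⟩ := exists_isPath_of_netOutflow_pos (v := v) (w := u) (F \ edgeFinset p)
    (fun z hz => by rw [hF₂]; split_ifs <;> simp_all) (by rw [hF₂]; simp [huv.symm])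
  refine ⟨p, q, hp.mono hFE, hq.mono ((Finset.coe_subset.2 Finset.sdiff_subset).trans hFE), ?_⟩
  refine Set.eq_empty_of_forall_notMem fun e ⟨hep, heq⟩ => ?_
  exact (Finset.mem_sdiff.1 (hq.mem_of_mem_pathEdges heq)).2 (mem_edgeFinset.2 hep)

theorem IsPath.edgeDisjointPaths_of_residualEdges [DecidableEq V] {g : List V}
    (hp : IsPath E u v p) (hnd : p.Nodup) (huv : u ≠ v)
    (hg : IsPath (residualEdges E (pathEdges p)) u v g) (hgnd : g.Nodup) :
    EdgeDisjointPaths E u v := by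
  let back := (edgeFinset g).filter (fun e => e.swap ∈ edgeFinset p)
  let fwd := (edgeFinset g).filter (fun e => e.swap ∉ edgeFinset p)
  have hback : back.image Prod.swap ⊆ edgeFinset p := by
    intro e he
    obtain ⟨f, hf, rfl⟩ := Finset.mem_image.1 he
    exact (Finset.mem_filter.1 hf).2
  have hfwd : ∀ e ∈ fwd, e ∈ E ∧ e ∉ pathEdges p := by
    intro e he
    obtain ⟨heg, hswap⟩ := Finset.mem_filter.1 he
    refine (hg.mem_of_mem_pathEdges (mem_edgeFinset.1 heg)).resolve_right fun h => hswap ?_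
    exact mem_edgeFinset.2 h
  refine edgeDisjointPaths_of_netOutflow ((edgeFinset p \ back.image Prod.swap) ∪ fwd) ?_ huv ?_
  · intro e he
    rcases Finset.mem_union.1 (Finset.mem_coe.1 he) with he | he
    · exact hp.mem_of_mem_pathEdges (mem_edgeFinset.1 (Finset.mem_sdiff.1 he).1)
    · exact (hfwd e he).1
  · intro z
    have hdisj : Disjoint (edgeFinset p \ back.image Prod.swap) fwd :=
      Finset.disjoint_left.2 fun e he hef =>
        (hfwd e hef).2 (mem_edgeFinset.1 (Finset.mem_sdiff.1 he).1)
    have hsplit : netOutflow back z + netOutflow fwd z = netOutflow (edgeFinset g) z :=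
      Finset.sum_filter_add_sum_filter_not _ _ _
    rw [netOutflow_union hdisj, netOutflow_sdiff hback, netOutflow_image_swap,
      hp.netOutflow_edgeFinset hnd]
    rw [hg.netOutflow_edgeFinset hgnd] at hsplit
    linear_combination hsplit

theorem edgeDisjointPaths_of_forall_exists_isPath_notMem (hreach : Reach E u v)
    (h : ∀ e, ∃ p, IsPath E u v p ∧ e ∉ pathEdges p) : EdgeDisjointPaths E u v := by
  classical
  by_cases huv : u = v
  · subst huv
    exact ⟨[u], [u], isPath_singleton u, isPath_singleton u, by simp [pathEdges_singleton]⟩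
  obtain ⟨p₀, hp₀⟩ := hreach
  obtain ⟨p, hp, hnd, -⟩ := hp₀.exists_nodup
  by_cases hres : Reach (residualEdges E (pathEdges p)) u v
  · obtain ⟨g₀, hg₀⟩ := hres
    obtain ⟨g, hg, hgnd, -⟩ := hg₀.exists_nodup
    exact hp.edgeDisjointPaths_of_residualEdges hnd huv hg hgnd
  · obtain ⟨e, he⟩ := hp.exists_forall_mem_of_not_reach_residualEdges hres
    obtain ⟨q, hq, heq⟩ := h e
    exact absurd (he q hq) heq

theorem IsBDRoot.not_dominates_of_forall_mem {r : V} {e : V × V} (hSC : StronglyConnected E)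
    (hr : IsBDRoot E s y r) (h : ∀ t, IsPath E s y t → e ∈ pathEdges t) :
    ¬ Dominates E s r e.1 := by
  intro hre
  have hfb : FlowBridge E s e := flowBridge_of_forall_mem (hSC s y) h
  have hdom : Dominates E s e.2 y := fun t ht => snd_mem_of_mem_pathEdges (h t ht)
  have hidom : ImmDom E s e.1 e.2 := hfb.immDom (hSC s e.2)
  have her : Dominates E s e.2 r := hr.2.2 e.2 hdom (Or.inr ⟨e.1, hidom, hfb⟩)
  exact hfb.fst_ne_snd (hSC s e.2) (hidom.1.antisymm (hSC s e.1) (her.trans hre))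

theorem exists_isPath_notMem_of_reachableIn {r r' : V} (hSC : StronglyConnected E)
    (hr : IsBDRoot E s v r) (huv : ReachableIn E (Dset E s r) u v)
    (hr' : IsBDRoot (rev E) s u r') (hvu : ReachableIn (rev E) (Dset (rev E) s r') v u)
    (e : V × V) : ∃ p, IsPath E u v p ∧ e ∉ pathEdges p := by
  by_contra! hsep
  by_cases hs : ∀ t, IsPath E s v t → e ∈ pathEdges t
  · obtain ⟨P, hP, hPD⟩ := huv
    exact hr.not_dominates_of_forall_mem hSC hs (hPD _ (fst_mem_of_mem_pathEdges (hsep P hP)))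
  · push Not at hs
    obtain ⟨t, ht, het⟩ := hs
    have hsR : ∀ q, IsPath (rev E) s u q → e.swap ∈ pathEdges q := by
      intro q hq
      have hq' : IsPath E u s q.reverse := hq.reverse
      rcases hq'.pathEdges_append_subset ht (hsep _ (hq'.append ht)) with he | he
      · simpa [mem_pathEdges_reverse] using he
      · exact absurd he het
    obtain ⟨Q, hQ, hQD⟩ := hvu
    have heQ : e.swap ∈ pathEdges Q := by
      simpa [mem_pathEdges_reverse] using hsep _ hQ.reverse
    exact hr'.not_dominates_of_forall_mem hSC.rev hsR (hQD _ (fst_mem_of_mem_pathEdges heQ))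

/-- `u` and `v` are 2-edge-connected iff their bridge-decomposition
roots coincide and they are strongly connected in the induced subgraph of the
dominated set of the root, both in `G_s` and in `G_s^R`. -/
theorem stmt5 {V : Type*} (E : Set (V × V)) (s u v ru rv rRu rRv : V)
    (hSC : StronglyConnected E)
    (hru : IsBDRoot E s u ru) (hrv : IsBDRoot E s v rv)
    (hrRu : IsBDRoot (rev E) s u rRu) (hrRv : IsBDRoot (rev E) s v rRv) :
    TwoEdgeConnected E u v ↔
      (ru = rv ∧
       ReachableIn E (Dset E s ru) u v ∧ ReachableIn E (Dset E s ru) v u ∧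
       rRu = rRv ∧
       ReachableIn (rev E) (Dset (rev E) s rRu) u v ∧
       ReachableIn (rev E) (Dset (rev E) s rRu) v u) := by
  refine ⟨fun h => ?_, fun ⟨hr, huv, hvu, hrR, huvR, hvuR⟩ => ⟨?_, ?_⟩⟩
  · obtain ⟨h₁, h₂, h₃⟩ := h.bdRoot_eq_and_reachableIn hSC hru hrv
    obtain ⟨h₄, h₅, h₆⟩ := h.rev.bdRoot_eq_and_reachableIn hSC.rev hrRu hrRv
    exact ⟨h₁, h₂, h₃, h₄, h₅, h₆⟩
  · exact edgeDisjointPaths_of_forall_exists_isPath_notMem (hSC u v)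
      (exists_isPath_notMem_of_reachableIn hSC (hr ▸ hrv) huv hrRu hvuR)
  · exact edgeDisjointPaths_of_forall_exists_isPath_notMem (hSC v u)
      (exists_isPath_notMem_of_reachableIn hSC hru hvu (hrR ▸ hrRv) huvR)
end

section
/- Let G be a strongly connected digraph with a fixed start vertex s, and suppose the bridge (u,v) of the flow graph G_s is locally canceled by the insertion of an edge (x,y), i.e., (u,v) is not a bridge of (G+(x,y))_s and v is not affected by the insertion. Then (u,v) is not a strong bridge of the digraph G+(x,y). -/
/-!  Basic notions for finite directed graphs given by an edge set `E : Set (V × V)`. -/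

variable {V : Type*}

/-!
The bridge `(u,v)` forces `d(v) = u`, so `u` still dominates `v` in `G + (x,y)`, as `v` is
not affected. Since `(u,v)` is canceled, some path from `s` to `v` in `G + (x,y)` avoids this
edge; it passes through `u`, and its part after `u` bypasses `(u,v)`. Replacing `(u,v)` by the
bypass in arbitrary paths shows that `G + (x,y)` stays strongly connected without `(u,v)`.
-/

open Relation

variable {E F : Set (V × V)} {s a b c u v w : V} {p l₁ l₂ : List V}

namespace IsPath

lemma mono_s9 (h : IsPath E a b p) (hEF : E ⊆ F) : IsPath F a b p :=
  ⟨h.1.imp fun _ _ hcd => hEF hcd, h.2⟩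

lemma left_of_append_cons (h : IsPath E a b (l₁ ++ w :: l₂)) : IsPath E a w (l₁ ++ [w]) := by
  obtain ⟨hc, hh, -⟩ := h
  refine ⟨hc.prefix ⟨l₂, by simp⟩, ?_, by simp⟩
  cases l₁ <;> simpa using hh

lemma right_of_append_cons (h : IsPath E a b (l₁ ++ w :: l₂)) : IsPath E w b (w :: l₂) := by
  obtain ⟨hc, -, hl⟩ := h
  exact ⟨hc.suffix ⟨l₁, rfl⟩, rfl, by rwa [List.getLast?_append_cons] at hl⟩

lemma snoc (h : IsPath E a b p) (he : (b, c) ∈ E) : IsPath E a c (p ++ [c]) := by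
  obtain ⟨hc, hh, hl⟩ := h
  refine ⟨hc.append (.singleton c) ?_, List.mem_head?_append_of_mem_head? hh, by simp⟩
  intro b' hb' c' hc'
  obtain rfl : b' = b := by simpa [hl] using hb'.symm
  obtain rfl : c = c' := by simpa using hc'
  exact he

end IsPath

lemma reach_iff_reflTransGen : Reach E a b ↔ ReflTransGen (fun c d => (c, d) ∈ E) a b := by
  constructor
  · rintro ⟨p, hc, hh, hl⟩
    have hp : p ≠ [] := by rintro rfl; simp at hh
    rw [List.head?_eq_some_head hp, Option.some_inj] at hh
    rw [List.getLast?_eq_some_getLast hp, Option.some_inj] at hl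
    exact hh ▸ hl ▸ List.relationReflTransGen_of_exists_isChain p hc hp
  · intro h
    obtain ⟨p, hp, hc, hh, hl⟩ := List.exists_isChain_ne_nil_of_relationReflTransGen h
    exact ⟨p, hc, hh ▸ List.head?_eq_some_head hp, hl ▸ List.getLast?_eq_some_getLast hp⟩

lemma Reach.exists_nodup_path (h : Reach E a b) : ∃ p, IsPath E a b p ∧ p.Nodup := by
  induction reach_iff_reflTransGen.1 h with
  | refl => exact ⟨[a], ⟨.singleton a, rfl, rfl⟩, List.nodup_singleton a⟩
  | @tail b c hab hbc ih =>
    obtain ⟨p, hp, hnd⟩ := ih (reach_iff_reflTransGen.2 hab)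
    by_cases hcp : c ∈ p
    · obtain ⟨l₁, l₂, rfl⟩ := List.append_of_mem hcp
      exact ⟨_, hp.left_of_append_cons, hnd.sublist (by simp)⟩
    · exact ⟨_, hp.snoc hbc, by simpa [← List.concat_eq_append, List.nodup_concat] using ⟨hcp, hnd⟩⟩

lemma StronglyConnected.mono_s9 (h : StronglyConnected E) (hEF : E ⊆ F) : StronglyConnected F :=
  fun a b => (h a b).elim fun p hp => ⟨p, hp.mono_s9 hEF⟩

lemma StronglyConnected.diff_singleton {e : V × V} (h : StronglyConnected E)
    (he : Reach (E \ {e}) e.1 e.2) : StronglyConnected (E \ {e}) := by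
  intro a b
  refine reach_iff_reflTransGen.2 (reflTransGen_closed (fun c d hcd => ?_) a b
    (reach_iff_reflTransGen.1 (h a b)))
  by_cases hce : (c, d) = e
  · exact reach_iff_reflTransGen.1 (hce ▸ he)
  · exact .single ⟨hcd, hce⟩

lemma Dominates.antisymm_s9 (hreach : Reach E s a) (haw : Dominates E s a w)
    (hwa : Dominates E s w a) : a = w := by
  by_contra hne
  obtain ⟨p, hp, hnd⟩ := hreach.exists_nodup_path
  obtain ⟨l₁, l₂, rfl⟩ := List.append_of_mem (hwa p hp)
  have ha₁ : a ∈ l₁ := by simpa [hne] using haw _ hp.left_of_append_cons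
  have ha₂ : a ∈ w :: l₂ := List.mem_of_getLast? hp.right_of_append_cons.2.2
  exact List.disjoint_of_nodup_append hnd ha₁ ha₂

lemma ImmDom.unique (ha : ImmDom E s a v) (hb : ImmDom E s b v) (hreach : Reach E s a) :
    a = b :=
  Dominates.antisymm_s9 hreach (hb.2.2 a ha.1 ha.2.1) (ha.2.2 b hb.1 hb.2.1)

namespace FlowBridge

lemma dominates (h : FlowBridge E s (u, v)) : Dominates E s u v :=
  fun p hp => (h.2 p hp).subset (by simp)

lemma fst_ne_snd_s9 (h : FlowBridge E s (u, v)) (hreach : Reach E s v) : u ≠ v := by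
  rintro rfl
  obtain ⟨p, hp, hnd⟩ := hreach.exists_nodup_path
  simpa using hnd.sublist (h.2 p hp).sublist

lemma immDom_s9 (h : FlowBridge E s (u, v)) (hreach : Reach E s v) : ImmDom E s u v := by
  refine ⟨h.dominates, h.fst_ne_snd_s9 hreach, fun w hw hwv q hq => ?_⟩
  simpa [hwv] using hw _ (hq.snoc h.1)

end FlowBridge

lemma reach_diff_of_not_flowBridge (he : (u, v) ∈ E) (hdom : Dominates E s u v)
    (h : ¬ FlowBridge E s (u, v)) : Reach (E \ {(u, v)}) u v := by
  obtain ⟨p, hp, hnin⟩ : ∃ p, IsPath E s v p ∧ ¬ [u, v] <:+: p := by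
    simpa [FlowBridge, he] using h
  obtain ⟨l₁, l₂, rfl⟩ := List.append_of_mem (hdom p hp)
  obtain ⟨hc, hh, hl⟩ := hp.right_of_append_cons
  refine ⟨u :: l₂, List.isChain_iff_forall_rel_of_append_cons_cons.2 ?_, hh, hl⟩
  rintro c d m₁ m₂ hsplit
  refine ⟨List.isChain_iff_forall_rel_of_append_cons_cons.1 hc hsplit, ?_⟩
  rintro ⟨rfl, rfl⟩
  exact hnin ⟨l₁ ++ m₁, m₂, by simp [hsplit]⟩

/-- if the bridge `(u,v)` of `G_s` is locally canceled by the insertion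
of `(x,y)` (it is canceled and `v` is not affected, i.e. `v` keeps its immediate
dominator `dv`), then `(u,v)` is not a strong bridge of `G+(x,y)`. -/
theorem stmt9 {V : Type*} (E : Set (V × V)) (s u v x y dv : V)
    (hSC : StronglyConnected E)
    (hbr : FlowBridge E s (u, v))
    (hcanc : ¬ FlowBridge (insert (x, y) E) s (u, v))
    (hdv : ImmDom E s dv v) (hdv' : ImmDom (insert (x, y) E) s dv v) :
    ¬ StrongBridge (insert (x, y) E) (u, v) := by
  obtain rfl : u = dv := (hbr.immDom_s9 (hSC s v)).unique hdv (hSC s u)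
  have hbypass : Reach (insert (x, y) E \ {(u, v)}) u v :=
    reach_diff_of_not_flowBridge (Set.mem_insert_of_mem _ hbr.1) hdv'.1 hcanc
  exact fun hsb => hsb.2 ((hSC.mono_s9 (Set.subset_insert _ _)).diff_singleton hbypass)
end
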